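/- The set of finite Blaschke products is closed under composition: if B and C are finite Blaschke products of degrees m and n respectively, then B ∘ C is a finite Blaschke product of degree mn. -/

import Mathlib

open Complex Metric Filter Set

/-- The Blaschke factor for zero `a` (convention: the factor is `z` when `a = 0`). -/
noncomputable def blaschkeFactor (a z : ℂ) : ℂ :=
  if a = 0 then z
  else (-(starRingEnd ℂ a) / ‖a‖) * ((z - a) / (1 - starRingEnd ℂ a * z))

/-- `f` is a Blaschke product on the unit disk: `f = η ∏ (-ā_j/|a_j|)(z-a_j)/(1-ā_j z)`
with `|η| = 1` and the Blaschke condition `∑ (1 - |a_j|) < ∞`; finite (and empty)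
products are allowed via the index set `s`. -/
def IsBlaschkeProduct (f : ℂ → ℂ) : Prop :=
  ∃ (η : ℂ) (s : Set ℕ) (a : ℕ → ℂ),
    ‖η‖ = 1 ∧ (∀ j ∈ s, ‖a j‖ < 1) ∧
    Summable (fun j : s => 1 - ‖a j.1‖) ∧
    ∀ z ∈ ball (0 : ℂ) 1,
      Multipliable (fun j : s => blaschkeFactor (a j.1) z) ∧
      f z = η * ∏' j : s, blaschkeFactor (a j.1) z

/-- `T` is a conformal automorphism of the unit disk, given globally by the
formula `T z = η (z - a)/(1 - ā z)` with `|a| < 1`, `|η| = 1`. -/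
def IsDiskAut (T : ℂ → ℂ) : Prop :=
  ∃ (η a : ℂ), ‖η‖ = 1 ∧ ‖a‖ < 1 ∧
    ∀ z : ℂ, T z = η * ((z - a) / (1 - starRingEnd ℂ a * z))

/-- `B` is an indestructible Blaschke product: `T ∘ B` is a Blaschke product for
every conformal automorphism `T` of the unit disk. -/
def IsIndestructible (B : ℂ → ℂ) : Prop :=
  IsBlaschkeProduct B ∧ ∀ T : ℂ → ℂ, IsDiskAut T → IsBlaschkeProduct (T ∘ B)

/-- `f` is a finite Blaschke product of degree `n`:
`f = η ∏_{j=1}^n (z - a_j)/(1 - ā_j z)` with `a_j ∈ 𝔻`, `|η| = 1`. -/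
def IsFiniteBlaschkeOfDegree (f : ℂ → ℂ) (n : ℕ) : Prop :=
  ∃ (η : ℂ) (a : Fin n → ℂ), ‖η‖ = 1 ∧ (∀ j, ‖a j‖ < 1) ∧
    ∀ z ∈ closedBall (0 : ℂ) 1,
      f z = η * ∏ j, (z - a j) / (1 - starRingEnd ℂ (a j) * z)

/-- `f` is a finite Blaschke product. -/
def IsFiniteBlaschke (f : ℂ → ℂ) : Prop :=
  ∃ n : ℕ, IsFiniteBlaschkeOfDegree f n

section Aux
open Polynomial

lemma key_normSq (a w : ℂ) :
    normSq (1 - starRingEnd ℂ a * w) - normSq (w - a) = (1 - normSq a) * (1 - normSq w) := by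
  simp [Complex.normSq_apply, Complex.sub_re, Complex.sub_im, Complex.mul_re, Complex.mul_im,
    Complex.conj_re, Complex.conj_im, Complex.one_re, Complex.one_im]
  ring

lemma normSq_lt_one {a : ℂ} (ha : ‖a‖ < 1) : normSq a < 1 := by
  rw [← Complex.sq_norm]; nlinarith [norm_nonneg a]

lemma normSq_le_one {a : ℂ} (ha : ‖a‖ ≤ 1) : normSq a ≤ 1 := by
  rw [← Complex.sq_norm]; nlinarith [norm_nonneg a]

lemma abs_num_le_denom {a w : ℂ} (ha : ‖a‖ < 1) (hw : ‖w‖ ≤ 1) :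
    ‖w - a‖ ≤ ‖1 - starRingEnd ℂ a * w‖ := by
  rw [Complex.norm_def, Complex.norm_def]
  apply Real.sqrt_le_sqrt
  nlinarith [key_normSq a w, normSq_lt_one ha, normSq_le_one hw]

lemma abs_denom_le_num {a w : ℂ} (ha : ‖a‖ < 1) (hw : 1 ≤ ‖w‖) :
    ‖1 - starRingEnd ℂ a * w‖ ≤ ‖w - a‖ := by
  rw [Complex.norm_def, Complex.norm_def]
  apply Real.sqrt_le_sqrt
  have h2 : (1:ℝ) ≤ normSq w := by
    rw [← Complex.sq_norm]; nlinarith [norm_nonneg w]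
  nlinarith [key_normSq a w, normSq_lt_one ha, h2]

lemma denom_ne_zero {a w : ℂ} (h : ‖a‖ * ‖w‖ < 1) :
    1 - starRingEnd ℂ a * w ≠ 0 := by
  intro hz
  have h1 : (starRingEnd ℂ a) * w = 1 := by linear_combination -hz
  have h2 := congrArg (‖·‖) h1
  simp [map_mul] at h2
  rw [h2] at h
  simp at h

lemma abs_factor_le_one {a w : ℂ} (ha : ‖a‖ < 1) (hw : ‖w‖ ≤ 1) :
    ‖(w - a) / (1 - starRingEnd ℂ a * w)‖ ≤ 1 := by
  rw [norm_div]
  have hd : 1 - starRingEnd ℂ a * w ≠ 0 := by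
    apply denom_ne_zero
    calc ‖a‖ * ‖w‖ ≤ ‖a‖ * 1 := by
          exact mul_le_mul_of_nonneg_left hw (norm_nonneg a)
      _ < 1 := by simpa using ha
  rw [div_le_one (by simpa using (norm_pos_iff.mpr hd))]
  exact abs_num_le_denom ha hw
open Polynomial

lemma factor_poly (p : Polynomial ℂ) (n : ℕ) (hn : p.natDegree = n) (_h0 : p ≠ 0) :
    ∃ b : Fin n → ℂ, (∀ k, p.eval (b k) = 0) ∧
      ∀ z, p.eval z = p.leadingCoeff * ∏ k, (z - b k) := by
  have hsp : p.Splits := IsAlgClosed.splits p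
  have hcard : p.roots.card = n := by
    rw [Polynomial.splits_iff_card_roots.mp hsp, hn]
  have hlen : p.roots.toList.length = n := by simp [hcard]
  refine ⟨fun k => p.roots.toList.get (Fin.cast hlen.symm k), fun k => ?_, fun z => ?_⟩
  · have hm : p.roots.toList.get (Fin.cast hlen.symm k) ∈ p.roots := by
      rw [← p.roots.mem_toList, List.get_eq_getElem]
      exact List.getElem_mem _
    exact (Polynomial.isRoot_of_mem_roots hm)
  · conv_lhs => rw [hsp.eq_prod_roots]
    rw [Polynomial.eval_mul, Polynomial.eval_C, Polynomial.eval_multiset_prod]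
    congr 1
    have h2 : ∀ i : Fin n, (z - p.roots.toList.get (Fin.cast hlen.symm i)) =
        (fun i : Fin p.roots.toList.length => z - p.roots.toList[(i:ℕ)]) (Fin.cast hlen.symm i) := by
      intro i; simp
    calc (Multiset.map (eval z) (Multiset.map (fun a => X - C a) p.roots)).prod
        = (Multiset.map (fun a => z - a) p.roots).prod := by
          rw [Multiset.map_map]; congr 1; apply Multiset.map_congr rfl; intro a _; simp
      _ = (p.roots.toList.map (fun a => z - a)).prod := by
          conv_lhs => rw [← p.roots.coe_toList]
          rw [Multiset.map_coe, Multiset.prod_coe]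
      _ = ∏ i : Fin p.roots.toList.length, (z - p.roots.toList[(i:ℕ)]) := by
          exact (Fin.prod_univ_fun_getElem _ (fun a => z - a)).symm
      _ = ∏ k : Fin n, (z - p.roots.toList.get (Fin.cast hlen.symm k)) := by
          rw [Finset.prod_congr rfl (fun i _ => h2 i)]
          exact (Fin.prod_congr' (fun i : Fin p.roots.toList.length => z - p.roots.toList[(i:ℕ)]) hlen.symm).symm


variable {n : ℕ}

noncomputable def Ppoly (η a : ℂ) (c : Fin n → ℂ) : Polynomial ℂ :=
  Polynomial.C η * ∏ k, (Polynomial.X - Polynomial.C (c k)) -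
    Polynomial.C a * ∏ k, (1 - Polynomial.C (starRingEnd ℂ (c k)) * Polynomial.X)

lemma Ppoly_eval (η a : ℂ) (c : Fin n → ℂ) (z : ℂ) :
    (Ppoly η a c).eval z = η * ∏ k, (z - c k) - a * ∏ k, (1 - starRingEnd ℂ (c k) * z) := by
  simp [Ppoly, eval_prod]

lemma Ppoly_coeff_n (η a : ℂ) (c : Fin n → ℂ) :
    (Ppoly η a c).coeff n = η - a * ∏ k, (-(starRingEnd ℂ (c k))) := by
  have hN : (∏ k : Fin n, (Polynomial.X - Polynomial.C (c k))).coeff n = 1 := by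
    have hm : (∏ k : Fin n, (Polynomial.X - Polynomial.C (c k))).Monic :=
      monic_prod_of_monic _ _ (fun k _ => monic_X_sub_C (c k))
    have hd : (∏ k : Fin n, (Polynomial.X - Polynomial.C (c k))).natDegree = n := by
      simpa using natDegree_prod_of_monic Finset.univ _ (fun k _ => monic_X_sub_C (c k))
    have h2 := hm.coeff_natDegree; rwa [hd] at h2
  have hD : (∏ k : Fin n, (1 - Polynomial.C (starRingEnd ℂ (c k)) * Polynomial.X)).coeff n
      = ∏ k : Fin n, (-(starRingEnd ℂ (c k))) := by
    have := coeff_prod_of_natDegree_le (s := Finset.univ)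
      (fun k : Fin n => (1 - Polynomial.C (starRingEnd ℂ (c k)) * Polynomial.X)) 1
      (fun k _ => by
        apply le_trans (natDegree_sub_le _ _)
        exact max_le (by simp) (le_trans (natDegree_C_mul_le _ _) (by simp [natDegree_X])))
    simp only [Finset.card_univ, Fintype.card_fin, mul_one] at this
    rw [this]
    congr 1; funext k
    simp [coeff_sub, coeff_one]
  simp [Ppoly, coeff_sub, coeff_C_mul, hN, hD]

lemma Ppoly_natDegree (η a : ℂ) (c : Fin n → ℂ) (hη : ‖η‖ = 1)
    (ha : ‖a‖ < 1) (hc : ∀ k, ‖c k‖ < 1) :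
    (Ppoly η a c).natDegree = n ∧ (Ppoly η a c).coeff n ≠ 0 := by
  have habs : ‖a * ∏ k, (-(starRingEnd ℂ (c k)))‖ < 1 := by
    rw [norm_mul, norm_prod]
    calc ‖a‖ * ∏ k, ‖-(starRingEnd ℂ (c k))‖
        ≤ ‖a‖ * 1 := by
          apply mul_le_mul_of_nonneg_left _ (norm_nonneg a)
          apply Finset.prod_le_one (fun k _ => norm_nonneg _)
          intro k _
          simp only [norm_neg, Complex.norm_conj]
          exact le_of_lt (hc k)
      _ < 1 := by simpa using ha
  have hcoeff : (Ppoly η a c).coeff n ≠ 0 := by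
    rw [Ppoly_coeff_n]
    intro h
    have : η = a * ∏ k, (-(starRingEnd ℂ (c k))) := by linear_combination h
    rw [this] at hη
    rw [hη] at habs
    exact lt_irrefl 1 habs
  refine ⟨le_antisymm ?_ (le_natDegree_of_ne_zero hcoeff), hcoeff⟩
  apply le_trans (natDegree_sub_le _ _)
  apply max_le
  · apply le_trans (natDegree_C_mul_le _ _)
    apply le_trans (natDegree_prod_le _ _)
    apply le_trans (Finset.sum_le_card_nsmul _ _ 1 (fun k _ => by simp [natDegree_X_sub_C]))
    simp
  · apply le_trans (natDegree_C_mul_le _ _)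
    apply le_trans (natDegree_prod_le _ _)
    apply le_trans (Finset.sum_le_card_nsmul _ _ 1 (fun k _ => ?_))
    · simp
    · apply le_trans (natDegree_sub_le _ _)
      exact max_le (by simp) (le_trans (natDegree_C_mul_le _ _) (by simp [natDegree_X]))

lemma Ppoly_root_in_disk (η a : ℂ) (c : Fin n → ℂ) (hη : ‖η‖ = 1)
    (ha : ‖a‖ < 1) (hc : ∀ k, ‖c k‖ < 1)
    {b : ℂ} (hb : (Ppoly η a c).eval b = 0) : ‖b‖ < 1 := by
  by_contra hge
  push_neg at hge
  rw [Ppoly_eval] at hb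
  have heq : η * ∏ k, (b - c k) = a * ∏ k, (1 - starRingEnd ℂ (c k) * b) := by
    linear_combination hb
  by_cases hD : ∏ k : Fin n, (1 - starRingEnd ℂ (c k) * b) = 0
  · rw [hD, mul_zero] at heq
    have hη0 : η ≠ 0 := by intro h; rw [h] at hη; simp at hη
    rcases Finset.prod_eq_zero_iff.mp ((mul_eq_zero.mp heq).resolve_left hη0) with ⟨k, _, hk⟩
    have : b = c k := by linear_combination hk
    rw [this] at hge
    exact absurd (hc k) (not_lt.mpr hge)
  · have habs := congrArg (‖·‖) heq
    rw [norm_mul, norm_mul, norm_prod, norm_prod, hη, one_mul] at habs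
    have hDpos : 0 < ∏ k : Fin n, ‖1 - starRingEnd ℂ (c k) * b‖ := by
      apply Finset.prod_pos
      intro k _
      rw [norm_pos_iff]
      intro h; apply hD; exact Finset.prod_eq_zero (Finset.mem_univ k) h
    have hle : ∏ k : Fin n, ‖1 - starRingEnd ℂ (c k) * b‖
        ≤ ∏ k : Fin n, ‖b - c k‖ := by
      apply Finset.prod_le_prod (fun k _ => norm_nonneg _)
      intro k _
      exact abs_denom_le_num (hc k) hge
    have : ∏ k : Fin n, ‖b - c k‖ < ∏ k : Fin n, ‖b - c k‖ := by
      calc ∏ k : Fin n, ‖b - c k‖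
          = ‖a‖ * ∏ k : Fin n, ‖1 - starRingEnd ℂ (c k) * b‖ := habs
        _ < 1 * ∏ k : Fin n, ‖1 - starRingEnd ℂ (c k) * b‖ := by
            exact mul_lt_mul_of_pos_right ha hDpos
        _ = ∏ k : Fin n, ‖1 - starRingEnd ℂ (c k) * b‖ := one_mul _
        _ ≤ _ := hle
    exact lt_irrefl _ this

lemma mul_conj_eq_one {η : ℂ} (hη : ‖η‖ = 1) : η * starRingEnd ℂ η = 1 := by
  rw [Complex.mul_conj]
  norm_cast
  rw [Complex.normSq_eq_norm_sq, hη, one_pow]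

lemma mobius_comp {n : ℕ} (η : ℂ) (c : Fin n → ℂ) (a : ℂ)
    (hη : ‖η‖ = 1) (hc : ∀ k, ‖c k‖ < 1) (ha : ‖a‖ < 1) :
    ∃ (μ : ℂ) (b : Fin n → ℂ), ‖μ‖ = 1 ∧ (∀ k, ‖b k‖ < 1) ∧
      ∀ z ∈ closedBall (0:ℂ) 1,
        ((η * ∏ k, (z - c k) / (1 - starRingEnd ℂ (c k) * z)) - a) /
          (1 - starRingEnd ℂ a * (η * ∏ k, (z - c k) / (1 - starRingEnd ℂ (c k) * z)))
        = μ * ∏ k, (z - b k) / (1 - starRingEnd ℂ (b k) * z) := by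
  obtain ⟨hdeg, hcn⟩ := Ppoly_natDegree η a c hη ha hc
  have hP0 : Ppoly η a c ≠ 0 := fun h => hcn (by simp [h])
  set L := (Ppoly η a c).leadingCoeff with hLdef
  have hLne : L ≠ 0 := leadingCoeff_ne_zero.mpr hP0
  have hcLne : starRingEnd ℂ L ≠ 0 := by simpa using hLne
  have hηne : η ≠ 0 := by intro h; rw [h] at hη; simp at hη
  obtain ⟨b, hb0, hfac⟩ := factor_poly _ n hdeg hP0
  have hbin : ∀ k, ‖b k‖ < 1 := fun k => Ppoly_root_in_disk η a c hη ha hc (hb0 k)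
  have hμ : ‖L / (η * starRingEnd ℂ L)‖ = 1 := by
    rw [norm_div, norm_mul, hη, Complex.norm_conj, one_mul, div_self]
    simpa using hLne
  have hηconj : η * starRingEnd ℂ η = 1 := mul_conj_eq_one hη
  refine ⟨L / (η * starRingEnd ℂ L), b, hμ, hbin, ?_⟩
  -- the key polynomial identity
  have hQ : (∏ k, (1 - Polynomial.C (starRingEnd ℂ (c k)) * Polynomial.X)) -
      Polynomial.C (starRingEnd ℂ a * η) * ∏ k, (Polynomial.X - Polynomial.C (c k)) =
      Polynomial.C (η * starRingEnd ℂ L) *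
        ∏ k, (1 - Polynomial.C (starRingEnd ℂ (b k)) * Polynomial.X) := by
    apply Polynomial.eq_of_infinite_eval_eq
    apply Set.Infinite.mono (s := {(0:ℂ)}ᶜ)
    · intro z hz
      have hzne : z ≠ 0 := hz
      simp only [Set.mem_setOf_eq]
      have hA : ∀ (d : Fin n → ℂ), z ^ n * ∏ k, (z⁻¹ - d k) = ∏ k, (1 - d k * z) := by
        intro d
        rw [show (z ^ n) = ∏ _k : Fin n, z from by simp, ← Finset.prod_mul_distrib]
        apply Finset.prod_congr rfl
        intro k _
        field_simp
      have hB : z ^ n * ∏ k, (1 - c k * z⁻¹) = ∏ k, (z - c k) := by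
        rw [show (z ^ n) = ∏ _k : Fin n, z from by simp, ← Finset.prod_mul_distrib]
        apply Finset.prod_congr rfl
        intro k _
        field_simp
      set w : ℂ := (starRingEnd ℂ z)⁻¹ with hw
      have hcw : starRingEnd ℂ w = z⁻¹ := by rw [hw, map_inv₀, Complex.conj_conj]
      have e1 : Polynomial.eval z ((∏ k, (1 - Polynomial.C (starRingEnd ℂ (c k)) * Polynomial.X)) -
          Polynomial.C (starRingEnd ℂ a * η) * ∏ k, (Polynomial.X - Polynomial.C (c k))) =
          η * z ^ n * starRingEnd ℂ ((Ppoly η a c).eval w) := by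
        rw [Ppoly_eval]
        simp only [map_sub, map_mul, map_prod, map_one, Complex.conj_conj, hcw]
        have hrw : η * z ^ n * (starRingEnd ℂ η * ∏ k, (z⁻¹ - starRingEnd ℂ (c k)) -
            starRingEnd ℂ a * ∏ k, (1 - c k * z⁻¹)) =
            (η * starRingEnd ℂ η) * (z ^ n * ∏ k, (z⁻¹ - starRingEnd ℂ (c k))) -
            (η * starRingEnd ℂ a) * (z ^ n * ∏ k, (1 - c k * z⁻¹)) := by ring
        rw [hrw, hA, hB, hηconj, one_mul]
        simp only [Polynomial.eval_sub, Polynomial.eval_mul, Polynomial.eval_prod,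
          Polynomial.eval_one, Polynomial.eval_C, Polynomial.eval_X]
        ring
      have e2 : Polynomial.eval z (Polynomial.C (η * starRingEnd ℂ L) *
          ∏ k, (1 - Polynomial.C (starRingEnd ℂ (b k)) * Polynomial.X)) =
          η * z ^ n * starRingEnd ℂ ((Ppoly η a c).eval w) := by
        rw [hfac w, ← hLdef]
        simp only [map_mul, map_prod, map_sub, Complex.conj_conj, hcw]
        have hrw : η * z ^ n * (starRingEnd ℂ L * ∏ k, (z⁻¹ - starRingEnd ℂ (b k))) =
            (η * starRingEnd ℂ L) * (z ^ n * ∏ k, (z⁻¹ - starRingEnd ℂ (b k))) := by ring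
        rw [hrw, hA]
        simp only [Polynomial.eval_mul, Polynomial.eval_prod, Polynomial.eval_sub,
          Polynomial.eval_one, Polynomial.eval_C, Polynomial.eval_X]
      rw [e1, e2]
    · exact Set.Finite.infinite_compl (Set.finite_singleton 0)
  have hkey : ∀ z : ℂ, (∏ k, (1 - starRingEnd ℂ (c k) * z)) -
      (starRingEnd ℂ a * η) * ∏ k, (z - c k) =
      (η * starRingEnd ℂ L) * ∏ k, (1 - starRingEnd ℂ (b k) * z) := by
    intro z
    have := congrArg (Polynomial.eval z) hQ
    simpa [Polynomial.eval_prod] using this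
  -- now the pointwise identity on the closed ball
  intro z hz
  rw [Metric.mem_closedBall, dist_zero_right] at hz
  have hdc : ∀ k, 1 - starRingEnd ℂ (c k) * z ≠ 0 := by
    intro k
    apply denom_ne_zero
    calc ‖c k‖ * ‖z‖ ≤ ‖c k‖ * 1 :=
          mul_le_mul_of_nonneg_left hz (norm_nonneg _)
      _ < 1 := by simpa using hc k
  have hdb : ∀ k, 1 - starRingEnd ℂ (b k) * z ≠ 0 := by
    intro k
    apply denom_ne_zero
    calc ‖b k‖ * ‖z‖ ≤ ‖b k‖ * 1 :=
          mul_le_mul_of_nonneg_left hz (norm_nonneg _)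
      _ < 1 := by simpa using hbin k
  have hD : ∏ k : Fin n, (1 - starRingEnd ℂ (c k) * z) ≠ 0 :=
    Finset.prod_ne_zero_iff.mpr (fun k _ => hdc k)
  have hDb : ∏ k : Fin n, (1 - starRingEnd ℂ (b k) * z) ≠ 0 :=
    Finset.prod_ne_zero_iff.mpr (fun k _ => hdb k)
  have hnum : (η * ∏ k, (z - c k) / (1 - starRingEnd ℂ (c k) * z)) - a =
      (Ppoly η a c).eval z / ∏ k, (1 - starRingEnd ℂ (c k) * z) := by
    rw [Ppoly_eval, Finset.prod_div_distrib, eq_div_iff hD]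
    have hinv : (∏ k, (1 - starRingEnd ℂ (c k) * z)) * (∏ k, (1 - starRingEnd ℂ (c k) * z))⁻¹ = 1 := mul_inv_cancel₀ hD
    rw [div_eq_mul_inv]
    linear_combination (η * ∏ k, (z - c k)) * hinv
  have hden : 1 - starRingEnd ℂ a * (η * ∏ k, (z - c k) / (1 - starRingEnd ℂ (c k) * z)) =
      ((η * starRingEnd ℂ L) * ∏ k, (1 - starRingEnd ℂ (b k) * z)) /
        ∏ k, (1 - starRingEnd ℂ (c k) * z) := by
    rw [← hkey z, Finset.prod_div_distrib, eq_div_iff hD]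
    have hinv : (∏ k, (1 - starRingEnd ℂ (c k) * z)) * (∏ k, (1 - starRingEnd ℂ (c k) * z))⁻¹ = 1 := mul_inv_cancel₀ hD
    rw [div_eq_mul_inv]
    linear_combination (-(starRingEnd ℂ a * η * ∏ k, (z - c k))) * hinv
  rw [hnum, hden, hfac z, ← hLdef, Finset.prod_div_distrib, div_div_div_cancel_right₀]
  · field_simp
  · exact hD

theorem finite_blaschke_comp' (B C : ℂ → ℂ) (m n : ℕ)
    (hB : ∃ (η : ℂ) (a : Fin m → ℂ), ‖η‖ = 1 ∧ (∀ j, ‖a j‖ < 1) ∧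
      ∀ z ∈ closedBall (0 : ℂ) 1, B z = η * ∏ j, (z - a j) / (1 - starRingEnd ℂ (a j) * z))
    (hC : ∃ (η : ℂ) (a : Fin n → ℂ), ‖η‖ = 1 ∧ (∀ j, ‖a j‖ < 1) ∧
      ∀ z ∈ closedBall (0 : ℂ) 1, C z = η * ∏ j, (z - a j) / (1 - starRingEnd ℂ (a j) * z)) :
    ∃ (η : ℂ) (a : Fin (m * n) → ℂ), ‖η‖ = 1 ∧ (∀ j, ‖a j‖ < 1) ∧
      ∀ z ∈ closedBall (0 : ℂ) 1,
        (B ∘ C) z = η * ∏ j, (z - a j) / (1 - starRingEnd ℂ (a j) * z) := by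
  obtain ⟨ηB, aB, hηB, haB, hBform⟩ := hB
  obtain ⟨ηC, cC, hηC, hcC, hCform⟩ := hC
  have h := fun j : Fin m => mobius_comp ηC cC (aB j) hηC hcC (haB j)
  choose μ bb hμ hbb hform using h
  refine ⟨ηB * ∏ j, μ j, fun i => bb (finProdFinEquiv.symm i).1 (finProdFinEquiv.symm i).2,
    ?_, ?_, ?_⟩
  · rw [norm_mul, norm_prod, hηB, one_mul]
    rw [Finset.prod_congr rfl (fun j _ => hμ j)]
    simp
  · intro i
    exact hbb _ _
  · intro z hz
    have hz1 : ‖z‖ ≤ 1 := by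
      rwa [Metric.mem_closedBall, dist_zero_right] at hz
    have hCz : ‖C z‖ ≤ 1 := by
      rw [hCform z hz, norm_mul, hηC, one_mul, norm_prod]
      apply Finset.prod_le_one (fun k _ => norm_nonneg _)
      intro k _
      exact abs_factor_le_one (hcC k) hz1
    have hCzmem : C z ∈ closedBall (0 : ℂ) 1 := by
      rwa [Metric.mem_closedBall, dist_zero_right]
    have hfactor : ∀ j : Fin m, (C z - aB j) / (1 - starRingEnd ℂ (aB j) * C z) =
        μ j * ∏ k, (z - bb j k) / (1 - starRingEnd ℂ (bb j k) * z) := by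
      intro j
      rw [hCform z hz]
      exact hform j z hz
    calc (B ∘ C) z = ηB * ∏ j, (C z - aB j) / (1 - starRingEnd ℂ (aB j) * C z) := by
          exact hBform (C z) hCzmem
      _ = ηB * ∏ j, (μ j * ∏ k, (z - bb j k) / (1 - starRingEnd ℂ (bb j k) * z)) := by
          rw [Finset.prod_congr rfl (fun j _ => hfactor j)]
      _ = (ηB * ∏ j, μ j) * ∏ j, ∏ k, (z - bb j k) / (1 - starRingEnd ℂ (bb j k) * z) := by
          rw [Finset.prod_mul_distrib]; ring
      _ = (ηB * ∏ j, μ j) * ∏ i : Fin (m * n),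
            (z - bb (finProdFinEquiv.symm i).1 (finProdFinEquiv.symm i).2) /
            (1 - starRingEnd ℂ (bb (finProdFinEquiv.symm i).1 (finProdFinEquiv.symm i).2) * z) := by
          congr 1
          rw [← Fintype.prod_prod_type']
          exact (Equiv.prod_comp finProdFinEquiv.symm
            (fun p : Fin m × Fin n => (z - bb p.1 p.2) /
              (1 - starRingEnd ℂ (bb p.1 p.2) * z))).symm

end Aux

/-- The composition of finite Blaschke products of degrees `m` and `n` is a
finite Blaschke product of degree `m * n`. -/
theorem finite_blaschke_comp (B C : ℂ → ℂ) (m n : ℕ)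
    (hB : IsFiniteBlaschkeOfDegree B m) (hC : IsFiniteBlaschkeOfDegree C n) :
    IsFiniteBlaschkeOfDegree (B ∘ C) (m * n) :=
  finite_blaschke_comp' B C m n hB hC
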